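/- arXiv:1202.3639 — 6 statements merged into one kernel-verified Lean document; each statement's English description precedes it below -/
import Mathlib

section
/- Δ_T·(q+ε) − Δ_H·(p−ε) > 0; that is, the expected one-step increment of the log-likelihood random walk under a not-heavy coin (which gains Δ_H with probability p−ε and loses Δ_T with probability q+ε) is strictly negative. -/
/-- The expected one-step increment of the log-likelihood random walk under a not-heavy coin
is strictly negative, i.e. `Δ_T·(q+ε) − Δ_H·(p−ε) > 0`. -/
theorem notheavy_drift_neg
    (ε p : ℝ) (hε : ε ∈ Set.Ioo (0:ℝ) (1/2)) (hp : p ∈ Set.Ioo ε (1 - ε))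
    (q ΔH ΔT : ℝ) (hq : q = 1 - p)
    (hΔH : ΔH = Real.log ((p + ε) / (p - ε)))
    (hΔT : ΔT = Real.log ((q + ε) / (q - ε))) :
    0 < ΔT * (q + ε) - ΔH * (p - ε) := by
  obtain ⟨hε0, hε2⟩ := hε
  obtain ⟨hpl, hpu⟩ := hp
  have ha : 0 < p - ε := by linarith
  have h1 : 0 < q - ε := by rw [hq]; linarith
  have h2 : 0 < q + ε := by linarith
  -- ΔH * (p - ε) < 2ε
  have hdiv : 0 < (p + ε) / (p - ε) := div_pos (by linarith) ha
  have hne : (p + ε) / (p - ε) ≠ 1 := by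
    intro h
    have := (div_eq_one_iff_eq (ne_of_gt ha)).mp h
    linarith
  have hlog1 : Real.log ((p + ε) / (p - ε)) < (p + ε) / (p - ε) - 1 :=
    Real.log_lt_sub_one_of_pos hdiv hne
  have h3 : ΔH * (p - ε) < 2 * ε := by
    rw [hΔH]
    have heq : ((p + ε) / (p - ε) - 1) * (p - ε) = 2 * ε := by
      field_simp; ring
    nlinarith [hlog1, ha]
  -- ΔT * (q + ε) ≥ 2ε
  have hdiv2 : 0 < (q - ε) / (q + ε) := div_pos h1 h2
  have hlog2 : Real.log ((q - ε) / (q + ε)) ≤ (q - ε) / (q + ε) - 1 :=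
    Real.log_le_sub_one_of_pos hdiv2
  have hΔTeq : ΔT = - Real.log ((q - ε) / (q + ε)) := by
    rw [hΔT, ← Real.log_inv, inv_div]
  have h4 : 2 * ε ≤ ΔT * (q + ε) := by
    rw [hΔTeq]
    have heq : (1 - (q - ε) / (q + ε)) * (q + ε) = 2 * ε := by
      field_simp; ring
    nlinarith [hlog2, h2]
  linarith
end

section
/- There exists a unique ρ₀ ∈ (0,1) such that (p+ε)·ρ₀^{Δ_H} + (q−ε)·ρ₀^{−Δ_T} = 1. -/
/-!
In the variable `t = log ρ`, `φ(e^t) = E[e^{tX}]` is a strictly convex function of `t`. It equals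
`1` at `t = 0`, where its derivative `E[X]` is a Kullback–Leibler divergence and hence positive
(Gibbs' inequality), and it tends to `∞` as `t → -∞` because `X` takes a negative value. So it
takes the value `1` at some `t < 0` (intermediate value theorem), and at only one: between two
such roots and `0` a strictly convex function would dip below `1`.
-/

open Real Set Filter Topology

section LevelCrossing

variable {f : ℝ → ℝ} {f' x : ℝ}

theorem StrictConvexOn.eq_of_lt_of_apply_eq {s : Set ℝ} (hf : StrictConvexOn ℝ s f) {y z : ℝ}
    (hx : x ∈ s) (hy : y ∈ s) (hz : z ∈ s) (hxz : x < z) (hyz : y < z)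
    (hfx : f x = f z) (hfy : f y = f z) : x = y := by
  have below {u v : ℝ} (hu : u ∈ s) (huv : u < v) (hvz : v < z) (hfu : f u = f z) :
      f v < f z := by
    have hseg : v ∈ openSegment ℝ u z := by
      rw [openSegment_eq_Ioo (huv.trans hvz)]
      exact ⟨huv, hvz⟩
    simpa [hfu] using hf.lt_on_openSegment hu hz (huv.trans hvz).ne hseg
  rcases lt_trichotomy x y with hxy | hxy | hxy
  · exact absurd hfy (below hx hxy hyz hfx).ne
  · exact hxy
  · exact absurd hfx (below hy hxy hxz hfy).ne

theorem HasDerivAt.exists_lt_apply_lt (hf : HasDerivAt f f' x) (hf' : 0 < f') :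
    ∃ t < x, f t < f x := by
  have hslope := (hasDerivAt_iff_tendsto_slope.mp hf).mono_left (nhdsLT_le_nhdsNE x)
  obtain ⟨t, hpos, htx⟩ :=
    ((hslope.eventually (eventually_gt_nhds hf')).and self_mem_nhdsWithin).exists
  exact ⟨t, htx, (slope_pos_iff_gt htx).mp hpos⟩

theorem StrictConvexOn.existsUnique_lt_apply_eq (hf : StrictConvexOn ℝ univ f)
    (hd : HasDerivAt f f' x) (hf' : 0 < f') (hbot : Tendsto f atBot atTop) :
    ∃! t, t < x ∧ f t = f x := by
  obtain ⟨b, hbx, hb⟩ := hd.exists_lt_apply_lt hf'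
  obtain ⟨a, ha, hab⟩ := ((hbot.eventually_gt_atTop (f x)).and (eventually_lt_atBot b)).exists
  have hcont : ContinuousOn f (Icc a b) :=
    (hf.convexOn.continuousOn isOpen_univ).mono (subset_univ _)
  obtain ⟨t, ht, hft⟩ := intermediate_value_Ioo' hab.le hcont ⟨hb, ha⟩
  refine ⟨t, ⟨ht.2.trans hbx, hft⟩, fun u ⟨hux, hfu⟩ => ?_⟩
  exact hf.eq_of_lt_of_apply_eq trivial trivial trivial hux (ht.2.trans hbx) hfu hft

end LevelCrossing

noncomputable def twoPointMgf (a b x y t : ℝ) : ℝ := a * exp (t * x) + b * exp (t * y)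

section TwoPointMgf

variable {a b x y : ℝ}

theorem twoPointMgf_zero : twoPointMgf a b x y 0 = a + b := by
  simp [twoPointMgf]

theorem hasDerivAt_twoPointMgf_zero : HasDerivAt (twoPointMgf a b x y) (a * x + b * y) 0 := by
  have hx : HasDerivAt (fun t => a * exp (t * x)) (a * (exp (0 * x) * x)) 0 :=
    (hasDerivAt_mul_const x).exp.const_mul a
  have hy : HasDerivAt (fun t => b * exp (t * y)) (b * (exp (0 * y) * y)) 0 :=
    (hasDerivAt_mul_const y).exp.const_mul b
  exact (hx.add hy).congr_deriv (by simp)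

theorem strictConvexOn_const_mul_exp_mul (hb : 0 < b) (hy : y ≠ 0) :
    StrictConvexOn ℝ univ fun t => b * exp (t * y) := by
  refine ⟨convex_univ, fun s _ t _ hst μ ν hμ hν hμν => ?_⟩
  have h := strictConvexOn_exp.2 (mem_univ (s * y)) (mem_univ (t * y))
    ((mul_left_injective₀ hy).ne hst) hμ hν hμν
  simp only [smul_eq_mul] at h ⊢
  calc b * exp ((μ * s + ν * t) * y) = b * exp (μ * (s * y) + ν * (t * y)) := by ring_nf
    _ < b * (μ * exp (s * y) + ν * exp (t * y)) := by gcongr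
    _ = μ * (b * exp (s * y)) + ν * (b * exp (t * y)) := by ring

theorem convexOn_const_mul_exp_mul (ha : 0 ≤ a) : ConvexOn ℝ univ fun t => a * exp (t * x) := by
  simpa [mul_comm] using (convexOn_exp.comp_linearMap (LinearMap.mul ℝ ℝ x)).smul ha

theorem strictConvexOn_twoPointMgf (ha : 0 ≤ a) (hb : 0 < b) (hy : y ≠ 0) :
    StrictConvexOn ℝ univ (twoPointMgf a b x y) :=
  (convexOn_const_mul_exp_mul ha).add_strictConvexOn (strictConvexOn_const_mul_exp_mul hb hy)

theorem tendsto_twoPointMgf_atBot (ha : 0 ≤ a) (hb : 0 < b) (hy : y < 0) :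
    Tendsto (twoPointMgf a b x y) atBot atTop := by
  have hexp : Tendsto (fun t => b * exp (t * y)) atBot atTop :=
    (tendsto_exp_atTop.comp (tendsto_id.atBot_mul_const_of_neg hy)).const_mul_atTop hb
  exact tendsto_atTop_add_left_of_le _ 0 (fun t => by positivity) hexp

end TwoPointMgf

theorem mul_log_div_add_mul_log_div_pos {a b c d : ℝ} (ha : 0 < a) (hb : 0 < b) (hc : 0 < c)
    (hd : 0 < d) (hsum : a + b = c + d) (hac : a ≠ c) :
    0 < a * log (a / c) + b * log (b / d) := by
  have hca : log (c / a) < c / a - 1 :=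
    log_lt_sub_one_of_pos (by positivity) (div_ne_one_of_ne hac.symm)
  have hdb : log (d / b) ≤ d / b - 1 := log_le_sub_one_of_pos (by positivity)
  rw [← inv_div c, ← inv_div d, log_inv, log_inv]
  have e1 : a * (c / a - 1) = c - a := by field_simp
  have e2 : b * (d / b - 1) = d - b := by field_simp
  nlinarith [mul_lt_mul_of_pos_left hca ha, mul_le_mul_of_nonneg_left hdb hb.le]

theorem existsUnique_mem_Ioo_zero_one_of_log {P : ℝ → Prop} (h : ∃! t, t < 0 ∧ P t) :
    ∃! ρ, ρ ∈ Ioo (0 : ℝ) 1 ∧ P (log ρ) := by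
  obtain ⟨t, ⟨ht, hPt⟩, huniq⟩ := h
  refine ⟨exp t, ⟨⟨exp_pos t, exp_lt_one_iff.mpr ht⟩, by rwa [log_exp]⟩, ?_⟩
  rintro ρ ⟨⟨h0, h1⟩, hP⟩
  rw [← huniq (log ρ) ⟨log_neg h0 h1, hP⟩, exp_log h0]

/-- There exists a unique `ρ₀ ∈ (0,1)` with `(p+ε)·ρ₀^{Δ_H} + (q−ε)·ρ₀^{−Δ_T} = 1`. -/
theorem existsUnique_root_heavy
    (ε p : ℝ) (hε : ε ∈ Set.Ioo (0:ℝ) (1/2)) (hp : p ∈ Set.Ioo ε (1 - ε))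
    (q ΔH ΔT : ℝ) (hq : q = 1 - p)
    (hΔH : ΔH = Real.log ((p + ε) / (p - ε)))
    (hΔT : ΔT = Real.log ((q + ε) / (q - ε))) :
    ∃! ρ₀ : ℝ, ρ₀ ∈ Set.Ioo (0:ℝ) 1 ∧
      (p + ε) * ρ₀ ^ ΔH + (q - ε) * ρ₀ ^ (-ΔT) = 1 := by
  obtain ⟨hε, -⟩ := hε
  obtain ⟨hpε, hpq⟩ := hp
  have hA : 0 ≤ p + ε := by linarith
  have hB : 0 < q - ε := by linarith
  have hΔT_pos : 0 < ΔT := by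
    rw [hΔT]
    exact log_pos ((one_lt_div hB).mpr (by linarith))
  have hdrift : 0 < (p + ε) * ΔH + (q - ε) * -ΔT := by
    rw [hΔH, hΔT, ← log_inv, inv_div]
    exact mul_log_div_add_mul_log_div_pos (by linarith) hB (by linarith) (by linarith)
      (by ring) (by linarith)
  have hroot : ∃! t, t < 0 ∧ twoPointMgf (p + ε) (q - ε) ΔH (-ΔT) t = 1 := by
    have h := (strictConvexOn_twoPointMgf hA hB (by linarith)).existsUnique_lt_apply_eq
      hasDerivAt_twoPointMgf_zero hdrift (tendsto_twoPointMgf_atBot hA hB (by linarith))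
    rwa [twoPointMgf_zero, show p + ε + (q - ε) = 1 by linarith] at h
  refine (existsUnique_congr fun ρ => and_congr_right fun hρ => ?_).mp
    (existsUnique_mem_Ioo_zero_one_of_log hroot)
  rw [twoPointMgf, rpow_def_of_pos hρ.1, rpow_def_of_pos hρ.1]
end

section
/- There exists a unique ρ₀ ∈ (1,∞) such that (p−ε)·ρ₀^{Δ_H} + (q+ε)·ρ₀^{−Δ_T} = 1. -/
/-!
The root is `ρ₀ = e`: since `e ^ Δ_H = (p+ε)/(p-ε)` and `e ^ (-Δ_T) = (q-ε)/(q+ε)`, the two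
terms of `ψ e` are `p + ε` and `q - ε`. In the variable `t = log ρ` the function
`g t = (p-ε) e^{Δ_H t} + (q+ε) e^{-Δ_T t}` is strictly convex and equals `1` at `t = 0` and
`t = 1`, so it takes the value `1` at no other point.
-/

open Real Set

theorem strictConvexOn_mul_exp_mul {c α : ℝ} (hc : 0 < c) (hα : α ≠ 0) :
    StrictConvexOn ℝ univ fun t => c * exp (α * t) := by
  refine ⟨convex_univ, fun x _ y _ hxy a b ha hb hab => ?_⟩
  have hexp := strictConvexOn_exp.2 (mem_univ (α * x)) (mem_univ (α * y))
    (by simpa [hα] using hxy) ha hb hab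
  simp only [smul_eq_mul] at hexp ⊢
  calc c * exp (α * (a * x + b * y)) = c * exp (a * (α * x) + b * (α * y)) := by ring_nf
    _ < c * (a * exp (α * x) + b * exp (α * y)) := by gcongr
    _ = a * (c * exp (α * x)) + b * (c * exp (α * y)) := by ring

theorem StrictConvexOn.eq_of_apply_eq_of_lt {f : ℝ → ℝ} (hf : StrictConvexOn ℝ univ f)
    {x y z c : ℝ} (hxy : x < y) (hxz : x < z) (hx : f x = c) (hy : f y = c) (hz : f z = c) :
    y = z := by
  have key : ∀ u v, x < u → u < v → f u = c → f v = c → False := by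
    intro u v hxu huv hu hv
    have := hf.lt_on_openSegment (mem_univ x) (mem_univ v) (hxu.trans huv).ne
      (by rw [openSegment_eq_Ioo (hxu.trans huv)]; exact ⟨hxu, huv⟩)
    rw [hx, hu, hv, max_self] at this
    exact this.false
  rcases lt_trichotomy y z with h | h | h
  · exact (key y z hxy h hy hz).elim
  · exact h
  · exact (key z y hxz h hz hy).elim

/-- There exists a unique `ρ₀ ∈ (1,∞)` with `(p−ε)·ρ₀^{Δ_H} + (q+ε)·ρ₀^{−Δ_T} = 1`. -/
theorem existsUnique_root_notheavy
    (ε p : ℝ) (hε : ε ∈ Set.Ioo (0:ℝ) (1/2)) (hp : p ∈ Set.Ioo ε (1 - ε))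
    (q ΔH ΔT : ℝ) (hq : q = 1 - p)
    (hΔH : ΔH = Real.log ((p + ε) / (p - ε)))
    (hΔT : ΔT = Real.log ((q + ε) / (q - ε))) :
    ∃! ρ₀ : ℝ, ρ₀ ∈ Set.Ioi (1:ℝ) ∧
      (p - ε) * ρ₀ ^ ΔH + (q + ε) * ρ₀ ^ (-ΔT) = 1 := by
  obtain ⟨hε, -⟩ := hε
  obtain ⟨hpε, hpε'⟩ := hp
  have hΔH_pos : 0 < ΔH := hΔH ▸ log_pos ((one_lt_div (by linarith)).2 (by linarith))
  have hΔT_pos : 0 < ΔT := hΔT ▸ log_pos ((one_lt_div (by linarith)).2 (by linarith))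
  have hexpH : exp ΔH = (p + ε) / (p - ε) :=
    hΔH ▸ exp_log (div_pos (by linarith) (by linarith))
  have hexpT : exp ΔT = (q + ε) / (q - ε) :=
    hΔT ▸ exp_log (div_pos (by linarith) (by linarith))
  set g : ℝ → ℝ := fun t => (p - ε) * exp (ΔH * t) + (q + ε) * exp (-ΔT * t)
  have hg_convex : StrictConvexOn ℝ univ g :=
    (strictConvexOn_mul_exp_mul (by linarith) hΔH_pos.ne').add
      (strictConvexOn_mul_exp_mul (by linarith) (neg_ne_zero.2 hΔT_pos.ne'))
  have hg_zero : g 0 = 1 := by simp [g, hq]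
  have hg_one : g 1 = 1 := by
    simp only [g, mul_one, neg_mul, exp_neg, hexpH, hexpT]
    field_simp [show p - ε ≠ 0 by linarith, show q + ε ≠ 0 by linarith]
    linarith
  have hψ_eq_g : ∀ ρ, 0 < ρ → (p - ε) * ρ ^ ΔH + (q + ε) * ρ ^ (-ΔT) = g (log ρ) := by
    intro ρ hρ
    simp only [g, rpow_def_of_pos hρ, mul_comm (log ρ)]
  refine ⟨exp 1, ⟨one_lt_exp_iff.2 one_pos, ?_⟩, ?_⟩
  · rw [hψ_eq_g _ (exp_pos 1), log_exp, hg_one]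
  · rintro ρ ⟨hρ, hroot⟩
    have hρ_pos : 0 < ρ := zero_lt_one.trans hρ
    have hlog : log ρ = 1 := hg_convex.eq_of_apply_eq_of_lt (log_pos hρ) one_pos hg_zero
      ((hψ_eq_g ρ hρ_pos).symm.trans hroot) hg_one
    rw [← exp_log hρ_pos, hlog]
end

section
/- With ρ_min = (Δ_T(q−ε)/(Δ_H(p+ε)))^{1/(Δ_H+Δ_T)}, one has 1 − ρ_min^{Δ_H} ≥ (Δ_H·(p+ε) − Δ_T·(q−ε)) / (2·(Δ_H+Δ_T)·(p+ε)). -/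
/-!
With `A = Δ_H (p+ε)`, `B = Δ_T (q-ε)` and `S = Δ_H + Δ_T` we have
`ρ_min ^ Δ_H = (B/A) ^ (Δ_H/S)` with `Δ_H/S ∈ (0,1]`, so Bernoulli's inequality gives
`1 - ρ_min ^ Δ_H ≥ (Δ_H/S)(1 - B/A) = (A-B)/(S(p+ε))`. The elementary bounds
`b log(a/b) ≤ a - b ≤ a log(a/b)` give `B ≤ 2ε ≤ A`, so this is nonnegative and in particular
at least half of itself.
-/

open Real

lemma mul_log_div_le_sub {a b : ℝ} (ha : 0 < a) (hb : 0 < b) : b * log (a / b) ≤ a - b :=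
  calc b * log (a / b) ≤ b * (a / b - 1) :=
        mul_le_mul_of_nonneg_left (log_le_sub_one_of_pos (by positivity)) hb.le
    _ = a - b := by field_simp

lemma sub_le_mul_log_div {a b : ℝ} (ha : 0 < a) (hb : 0 < b) : a - b ≤ a * log (a / b) :=
  calc a - b = a * (1 - (a / b)⁻¹) := by field_simp
    _ ≤ a * log (a / b) :=
        mul_le_mul_of_nonneg_left (one_sub_inv_le_log_of_pos (by positivity)) ha.le

lemma mul_one_sub_le_one_sub_rpow {x t : ℝ} (hx : 0 ≤ x) (ht₀ : 0 ≤ t) (ht₁ : t ≤ 1) :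
    t * (1 - x) ≤ 1 - x ^ t := by
  have := rpow_one_add_le_one_add_mul_self (s := x - 1) (by linarith) ht₀ ht₁
  rw [add_sub_cancel] at this
  linarith

lemma sub_div_le_one_sub_rpow_rpow {h k a b : ℝ} (hh : 0 < h) (hk : 0 ≤ k) (ha : 0 < a)
    (hb : 0 ≤ b) :
    (h * a - b) / ((h + k) * a) ≤ 1 - ((b / (h * a)) ^ (1 / (h + k))) ^ h := by
  have hhk : 0 < h + k := by positivity
  have hx : 0 ≤ b / (h * a) := by positivity
  rw [← rpow_mul hx, one_div_mul_eq_div]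
  calc (h * a - b) / ((h + k) * a) = h / (h + k) * (1 - b / (h * a)) := by field_simp
    _ ≤ 1 - (b / (h * a)) ^ (h / (h + k)) :=
        mul_one_sub_le_one_sub_rpow hx (by positivity) ((div_le_one hhk).2 (by linarith))

/-- `1 − ρ_min^{Δ_H} ≥ (Δ_H·(p+ε) − Δ_T·(q−ε)) / (2·(Δ_H+Δ_T)·(p+ε))`. -/
theorem one_sub_rhoMin_pow_ge
    (ε p : ℝ) (hε : ε ∈ Set.Ioo (0:ℝ) (1/2)) (hp : p ∈ Set.Ioo ε (1 - ε))
    (q ΔH ΔT ρmin : ℝ) (hq : q = 1 - p)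
    (hΔH : ΔH = Real.log ((p + ε) / (p - ε)))
    (hΔT : ΔT = Real.log ((q + ε) / (q - ε)))
    (hρmin : ρmin = (ΔT * (q - ε) / (ΔH * (p + ε))) ^ (1 / (ΔH + ΔT))) :
    (ΔH * (p + ε) - ΔT * (q - ε)) / (2 * (ΔH + ΔT) * (p + ε))
      ≤ 1 - ρmin ^ ΔH := by
  obtain ⟨hε₀, -⟩ := hε
  obtain ⟨hpε, hpε'⟩ := hp
  have hqε : 0 < q - ε := by linarith
  have hA : 2 * ε ≤ ΔH * (p + ε) := by
    rw [hΔH, mul_comm]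
    linarith [sub_le_mul_log_div (a := p + ε) (b := p - ε) (by linarith) (by linarith)]
  have hB : ΔT * (q - ε) ≤ 2 * ε := by
    rw [hΔT, mul_comm]
    linarith [mul_log_div_le_sub (a := q + ε) (b := q - ε) (by linarith) hqε]
  have hΔH₀ : 0 < ΔH := pos_of_mul_pos_left (by linarith) (by linarith : (0 : ℝ) ≤ p + ε)
  have hΔT₀ : 0 ≤ ΔT := hΔT ▸ log_nonneg ((one_le_div hqε).2 (by linarith))
  have key := sub_div_le_one_sub_rpow_rpow hΔH₀ hΔT₀ (by linarith : 0 < p + ε)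
    (mul_nonneg hΔT₀ hqε.le)
  have hS : 0 < (ΔH + ΔT) * (p + ε) := mul_pos (by linarith) (by linarith)
  rw [hρmin]
  exact (div_le_div_of_nonneg_left (by linarith) hS (by linarith)).trans key
end

section
/- Let (Ω, μ) be a probability space and X : ℕ → Ω → ℝ an i.i.d. sequence with μ(X_i = Δ_H) = p+ε and μ(X_i = −Δ_T) = q−ε (the heavy-coin log-likelihood increments). Let S_n = Σ_{i<n} X_i, fix B > 0, and let τ = inf{n ≥ 1 : S_n ≥ B or S_n < 0}. Then the probability of absorption at the upper barrier satisfies μ{ω : τ(ω) < ∞ and S_{τ(ω)}(ω) ≥ B} ≥ (Δ_H·(p+ε) − Δ_T·(q−ε)) / (2·(Δ_H+Δ_T)). -/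
/-!
Condition on the first step. With probability `p + ε` it is `+Δ_H`, and from then on the walk
stays `≥ 0` as long as the shifted walk `T m = X 1 + ⋯ + X m` stays `≥ -Δ_H`. The steps are
log-likelihood ratios of the heavy coin against the light one, so `E[exp (-X)] = 1` and
`exp (-T m)` is a nonnegative martingale; Ville's maximal inequality, obtained by stopping the walk
the first time it drops below the level (which keeps `E[exp (-walk)] = 1`), bounds the probability
that `T` ever drops below `-Δ_H` by `exp (-Δ_H) = (p - ε) / (p + ε)`, and this event is
independent of the first step. The drift `E[X]` is a Kullback–Leibler divergence, hence
positive, so by the strong law the walk reaches `B` almost surely, and on the event above it does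
so before it ever becomes negative. The upper absorption probability is therefore at least
`(p + ε) (1 - (p - ε) / (p + ε)) = 2ε`, and `log x ≤ x - 1` shows that the claimed bound is at
most `2ε`.
-/

open MeasureTheory ProbabilityTheory Finset Filter

namespace ProbabilityTheory

lemma measurable_iSup_comap_of_mem {Ω ι E : Type*} [MeasurableSpace E] {Z : ι → Ω → E}
    {S : Set ι} {i : ι} (hi : i ∈ S) :
    Measurable[⨆ j ∈ S, MeasurableSpace.comap (Z j) inferInstance] (Z i) :=
  (comap_measurable (Z i)).mono
    (le_iSup₂ (f := fun j (_ : j ∈ S) ↦ MeasurableSpace.comap (Z j) inferInstance) i hi) le_rfl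

noncomputable def walkStoppedBelow {Ω : Type*} (Z : ℕ → Ω → ℝ) (c : ℝ) : ℕ → Ω → ℝ
  | 0 => 0
  | n + 1 => fun ω ↦
      if walkStoppedBelow Z c n ω < c then walkStoppedBelow Z c n ω
      else walkStoppedBelow Z c n ω + Z n ω

section walkStoppedBelow

variable {Ω : Type*} {Z : ℕ → Ω → ℝ} {c : ℝ} {ω : Ω}

lemma walkStoppedBelow_succ_of_lt {n : ℕ} (h : walkStoppedBelow Z c n ω < c) :
    walkStoppedBelow Z c (n + 1) ω = walkStoppedBelow Z c n ω := if_pos h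

lemma walkStoppedBelow_succ_of_le {n : ℕ} (h : c ≤ walkStoppedBelow Z c n ω) :
    walkStoppedBelow Z c (n + 1) ω = walkStoppedBelow Z c n ω + Z n ω := if_neg h.not_gt

lemma walkStoppedBelow_eq_sum_of_le {n : ℕ} (h : c ≤ walkStoppedBelow Z c n ω) :
    walkStoppedBelow Z c n ω = ∑ i ∈ range n, Z i ω := by
  induction n with
  | zero => rfl
  | succ n ih =>
    by_cases hn : walkStoppedBelow Z c n ω < c
    · rw [walkStoppedBelow_succ_of_lt hn] at h
      exact absurd hn h.not_gt
    · rw [walkStoppedBelow_succ_of_le (not_lt.1 hn), ih (not_lt.1 hn), sum_range_succ]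

lemma walkStoppedBelow_lt_of_le {k n : ℕ} (hkn : k ≤ n) (h : walkStoppedBelow Z c k ω < c) :
    walkStoppedBelow Z c n ω < c := by
  induction n, hkn using Nat.le_induction with
  | base => exact h
  | succ n _ ih => rwa [walkStoppedBelow_succ_of_lt ih]

lemma walkStoppedBelow_lt_of_sum_lt {k n : ℕ} (hkn : k ≤ n) (h : ∑ i ∈ range k, Z i ω < c) :
    walkStoppedBelow Z c n ω < c := by
  refine walkStoppedBelow_lt_of_le hkn (lt_of_not_ge fun hk ↦ ?_)
  exact h.not_ge (walkStoppedBelow_eq_sum_of_le hk ▸ hk)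

lemma exp_neg_walkStoppedBelow_succ (n : ℕ) (ω : Ω) :
    Real.exp (-walkStoppedBelow Z c (n + 1) ω) = Real.exp (-walkStoppedBelow Z c n ω) +
      (Set.Ici c).indicator (fun u ↦ Real.exp (-u)) (walkStoppedBelow Z c n ω) *
        (Real.exp (-Z n ω) - 1) := by
  by_cases h : walkStoppedBelow Z c n ω < c
  · simp [walkStoppedBelow_succ_of_lt h, h]
  · rw [walkStoppedBelow_succ_of_le (not_lt.1 h), neg_add, Real.exp_add]
    simp only [Set.mem_Ici, not_lt.1 h, Set.indicator_of_mem]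
    ring

lemma measurable_walkStoppedBelow (n : ℕ) :
    Measurable[⨆ i ∈ Set.Iio n, MeasurableSpace.comap (Z i) inferInstance]
      (walkStoppedBelow Z c n) := by
  induction n with
  | zero => exact measurable_const
  | succ n ih =>
    have hmono : (⨆ i ∈ Set.Iio n, MeasurableSpace.comap (Z i) inferInstance)
        ≤ ⨆ i ∈ Set.Iio (n + 1), MeasurableSpace.comap (Z i) inferInstance :=
      biSup_mono fun i (hi : i < n) ↦ Nat.lt_succ_of_lt hi
    have ih' := ih.mono hmono le_rfl
    exact Measurable.ite (measurableSet_lt ih' measurable_const) ih'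
      (ih'.add (measurable_iSup_comap_of_mem (Nat.lt_succ_self n)))

end walkStoppedBelow

variable {Ω E : Type*} [MeasurableSpace Ω] {P : Measure Ω} [MeasurableSpace E]

lemma iIndepFun.indepFun_of_measurable_iSup {ι β γ : Type*} [MeasurableSpace β]
    [MeasurableSpace γ] {Z : ι → Ω → E} (hZ : iIndepFun Z P) (hZmeas : ∀ i, Measurable (Z i))
    {S T : Set ι} (hST : Disjoint S T) {f : Ω → β} {g : Ω → γ}
    (hf : Measurable[⨆ i ∈ S, MeasurableSpace.comap (Z i) inferInstance] f)
    (hg : Measurable[⨆ i ∈ T, MeasurableSpace.comap (Z i) inferInstance] g) :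
    IndepFun f g P := by
  rw [IndepFun_iff_Indep]
  exact indep_of_indep_of_le_right
    (indep_of_indep_of_le_left
      (indep_iSup_of_disjoint (fun i ↦ (hZmeas i).comap_le) hZ.iIndep hST) hf.comap_le)
    hg.comap_le

lemma iIndepFun.indepFun_zero_shift {X : ℕ → Ω → E} (hX : iIndepFun X P)
    (hXmeas : ∀ i, Measurable (X i)) :
    IndepFun (X 0) (fun ω i ↦ X (i + 1) ω) P :=
  hX.indepFun_of_measurable_iSup hXmeas (S := {0}) (T := Set.Ioi 0) (by simp)
    (measurable_iSup_comap_of_mem rfl)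
    (@measurable_pi_lambda _ _ _ (⨆ i ∈ Set.Ioi 0, MeasurableSpace.comap (X i) inferInstance) _ _
      fun i ↦ measurable_iSup_comap_of_mem (Nat.succ_pos i))

section Ville

variable [IsProbabilityMeasure P] {Z : ℕ → Ω → ℝ} (hZ : iIndepFun Z P)
  (hZmeas : ∀ i, Measurable (Z i)) (hint : ∀ i, Integrable (fun ω ↦ Real.exp (-Z i ω)) P)
  (hone : ∀ i, ∫ ω, Real.exp (-Z i ω) ∂P = 1)

include hZ hZmeas hint hone in
lemma integrable_and_integral_exp_neg_walkStoppedBelow (c : ℝ) (n : ℕ) :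
    Integrable (fun ω ↦ Real.exp (-walkStoppedBelow Z c n ω)) P ∧
      ∫ ω, Real.exp (-walkStoppedBelow Z c n ω) ∂P = 1 := by
  induction n with
  | zero => simp [walkStoppedBelow]
  | succ n ih =>
    set ψ : ℝ → ℝ := (Set.Ici c).indicator fun u ↦ Real.exp (-u)
    have hψ : Measurable ψ := (measurable_neg.exp).indicator measurableSet_Ici
    have hψ_bdd (u : ℝ) : ‖ψ u‖ ≤ Real.exp (-c) := by
      by_cases hu : c ≤ u
      · simp [ψ, hu, abs_of_pos (Real.exp_pos _)]
      · simp [ψ, hu, (Real.exp_pos _).le]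
    have hU : Measurable (walkStoppedBelow Z c n) :=
      (measurable_walkStoppedBelow n).mono (iSup₂_le fun i _ ↦ (hZmeas i).comap_le) le_rfl
    have hind : IndepFun (fun ω ↦ ψ (walkStoppedBelow Z c n ω))
        (fun ω ↦ Real.exp (-Z n ω) - 1) P :=
      (hZ.indepFun_of_measurable_iSup hZmeas (S := Set.Iio n) (T := {n}) (by simp)
        (measurable_walkStoppedBelow n) (measurable_iSup_comap_of_mem rfl)).comp
        hψ (measurable_neg.exp.sub_const 1)
    have hψU : Integrable (fun ω ↦ ψ (walkStoppedBelow Z c n ω)) P :=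
      .of_bound (hψ.comp hU).aestronglyMeasurable _ (.of_forall fun ω ↦ hψ_bdd _)
    have hZ1 : Integrable (fun ω ↦ Real.exp (-Z n ω) - 1) P := (hint n).sub (integrable_const 1)
    have hprod : Integrable (fun ω ↦ ψ (walkStoppedBelow Z c n ω) * (Real.exp (-Z n ω) - 1)) P :=
      hind.integrable_mul hψU hZ1
    have hfactor := hind.integral_mul_eq_mul_integral hψU.aestronglyMeasurable
      hZ1.aestronglyMeasurable
    simp only [Pi.mul_apply] at hfactor
    simp only [exp_neg_walkStoppedBelow_succ]
    refine ⟨ih.1.add hprod, ?_⟩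
    rw [integral_add ih.1 hprod, ih.2, hfactor, integral_sub (hint n) (integrable_const 1), hone n]
    simp

include hZ hZmeas hint hone in
lemma measure_walkStoppedBelow_lt_le (c : ℝ) (n : ℕ) :
    P {ω | walkStoppedBelow Z c n ω < c} ≤ ENNReal.ofReal (Real.exp c) := by
  obtain ⟨hU_int, hU_one⟩ :=
    integrable_and_integral_exp_neg_walkStoppedBelow hZ hZmeas hint hone c n
  have hmarkov := mul_meas_ge_le_integral_of_nonneg
    (.of_forall fun ω ↦ (Real.exp_pos _).le) hU_int (Real.exp (-c))
  rw [hU_one] at hmarkov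
  have hsub : {ω | walkStoppedBelow Z c n ω < c} ⊆
      {ω | Real.exp (-c) ≤ Real.exp (-walkStoppedBelow Z c n ω)} :=
    fun ω hω ↦ Real.exp_le_exp.2 (neg_le_neg hω.le)
  rw [ENNReal.le_ofReal_iff_toReal_le (measure_ne_top _ _) (Real.exp_pos c).le, ← measureReal_def]
  calc P.real {ω | walkStoppedBelow Z c n ω < c}
      ≤ P.real {ω | Real.exp (-c) ≤ Real.exp (-walkStoppedBelow Z c n ω)} := measureReal_mono hsub
    _ = Real.exp c * (Real.exp (-c) *
          P.real {ω | Real.exp (-c) ≤ Real.exp (-walkStoppedBelow Z c n ω)}) := by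
      rw [← mul_assoc, ← Real.exp_add, add_neg_cancel, Real.exp_zero, one_mul]
    _ ≤ Real.exp c := by
      simpa using mul_le_mul_of_nonneg_left hmarkov (Real.exp_pos c).le

include hZ hZmeas hint hone in
/-- Ville's maximal inequality for the nonnegative martingale `exp (-∑ i ∈ range n, Z i)`. -/
theorem measure_exists_sum_lt_le_exp (c : ℝ) :
    P {ω | ∃ n, ∑ i ∈ range n, Z i ω < c} ≤ ENNReal.ofReal (Real.exp c) := by
  have hsub : {ω | ∃ n, ∑ i ∈ range n, Z i ω < c} ⊆ ⋃ n, {ω | walkStoppedBelow Z c n ω < c} :=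
    fun ω ⟨n, hn⟩ ↦ Set.mem_iUnion.2 ⟨n, walkStoppedBelow_lt_of_sum_lt le_rfl hn⟩
  have hmono : Monotone fun n ↦ {ω | walkStoppedBelow Z c n ω < c} :=
    fun _ _ hkn _ hω ↦ walkStoppedBelow_lt_of_le hkn hω
  calc P {ω | ∃ n, ∑ i ∈ range n, Z i ω < c}
      ≤ P (⋃ n, {ω | walkStoppedBelow Z c n ω < c}) := measure_mono hsub
    _ = ⨆ n, P {ω | walkStoppedBelow Z c n ω < c} := hmono.measure_iUnion
    _ ≤ ENNReal.ofReal (Real.exp c) :=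
      iSup_le (measure_walkStoppedBelow_lt_le hZ hZmeas hint hone c)

end Ville

section TwoPoint

variable [MeasurableSingletonClass E]

lemma map_eq_two_point [IsProbabilityMeasure P] {X : Ω → E} (hX : Measurable X) {a b : E}
    (hab : a ≠ b) (hsum : P (X ⁻¹' {a}) + P (X ⁻¹' {b}) = 1) :
    P.map X = P (X ⁻¹' {a}) • Measure.dirac a + P (X ⁻¹' {b}) • Measure.dirac b := by
  have hdisj : Disjoint ({a} : Set E) {b} := Set.disjoint_singleton.2 hab
  have hmass : P.map X ({a} ∪ {b}) = 1 := by
    rw [measure_union hdisj (measurableSet_singleton b), Measure.map_apply hX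
      (measurableSet_singleton a), Measure.map_apply hX (measurableSet_singleton b), hsum]
  have := Measure.isProbabilityMeasure_map (μ := P) hX.aemeasurable
  have hae : ∀ᵐ x ∂P.map X, x ∈ ({a} : Set E) ∪ {b} := by
    rw [ae_iff]
    exact (prob_compl_eq_zero_iff
      ((measurableSet_singleton a).union (measurableSet_singleton b))).2 hmass
  rw [← Measure.restrict_eq_self_of_ae_mem hae, Measure.restrict_union hdisj
    (measurableSet_singleton b), Measure.restrict_singleton, Measure.restrict_singleton,
    Measure.map_apply hX (measurableSet_singleton a),
    Measure.map_apply hX (measurableSet_singleton b)]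

lemma integrable_and_integral_comp_of_map_eq_two_point {X : Ω → E} (hX : Measurable X)
    {a b : E} {α β : ENNReal} (hα : α ≠ ⊤) (hβ : β ≠ ⊤)
    (hmap : P.map X = α • Measure.dirac a + β • Measure.dirac b) {g : E → ℝ} (hg : Measurable g) :
    Integrable (fun ω ↦ g (X ω)) P ∧
      ∫ ω, g (X ω) ∂P = α.toReal * g a + β.toReal * g b := by
  have hint : Integrable g (P.map X) := by
    rw [hmap]
    exact ((integrable_dirac enorm_lt_top).smul_measure hα).add_measure
      ((integrable_dirac enorm_lt_top).smul_measure hβ)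
  refine ⟨hint.comp_measurable hX, ?_⟩
  rw [← integral_map hX.aemeasurable hg.aestronglyMeasurable, hmap,
    integral_add_measure, integral_smul_measure, integral_smul_measure, integral_dirac,
    integral_dirac, smul_eq_mul, smul_eq_mul]
  · exact (integrable_dirac enorm_lt_top).smul_measure hα
  · exact (integrable_dirac enorm_lt_top).smul_measure hβ

end TwoPoint

theorem ae_tendsto_sum_atTop_of_integral_pos {X : ℕ → Ω → ℝ} (hint : Integrable (X 0) P)
    (hindep : Pairwise fun i j ↦ IndepFun (X i) (X j) P)
    (hident : ∀ i, IdentDistrib (X i) (X 0) P P)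
    (hpos : 0 < ∫ ω, X 0 ω ∂P) :
    ∀ᵐ ω ∂P, Tendsto (fun n ↦ ∑ i ∈ range n, X i ω) atTop atTop := by
  filter_upwards [strong_law_ae_real X hint hindep hident] with ω hω
  refine (tendsto_natCast_atTop_atTop.atTop_mul_pos hpos hω).congr' ?_
  filter_upwards [eventually_ne_atTop 0] with n hn
  exact mul_div_cancel₀ _ (Nat.cast_ne_zero.2 hn)

end ProbabilityTheory

def exitTimes (s : ℕ → ℝ) (B : ℝ) : Set ℕ := {n | 1 ≤ n ∧ (B ≤ s n ∨ s n < 0)}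

def ExitsAbove (s : ℕ → ℝ) (B : ℝ) : Prop := (exitTimes s B).Nonempty ∧ B ≤ s (sInf (exitTimes s B))

lemma exitsAbove_of_nonneg {s : ℕ → ℝ} {B : ℝ} (hs0 : s 0 < B) (hs : ∀ n, 0 ≤ s (n + 1))
    (hreach : ∃ n, B ≤ s n) : ExitsAbove s B := by
  obtain ⟨n, hn⟩ := hreach
  have hn0 : n ≠ 0 := by rintro rfl; exact hs0.not_ge hn
  have hne : (exitTimes s B).Nonempty := ⟨n, Nat.one_le_iff_ne_zero.2 hn0, Or.inl hn⟩
  obtain ⟨h1, hup | hdown⟩ := Nat.sInf_mem hne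
  · exact ⟨hne, hup⟩
  · obtain ⟨k, hk⟩ := Nat.exists_eq_add_of_le' h1
    exact absurd (hs k) (hk ▸ hdown).not_ge

theorem mul_le_measure_exitsAbove {Ω : Type*} [MeasurableSpace Ω] {P : Measure Ω}
    [IsProbabilityMeasure P] {X : ℕ → Ω → ℝ} (hX : iIndepFun X P)
    (hXmeas : ∀ i, Measurable (X i)) (hint : ∀ i, Integrable (fun ω ↦ Real.exp (-X i ω)) P)
    (hone : ∀ i, ∫ ω, Real.exp (-X i ω) ∂P = 1) {B : ℝ} (hB : 0 < B)
    (hreach : ∀ᵐ ω ∂P, ∃ n, B ≤ ∑ i ∈ range n, X i ω) (a : ℝ) :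
    P (X 0 ⁻¹' {a}) * (1 - ENNReal.ofReal (Real.exp (-a))) ≤
      P {ω | ExitsAbove (fun n ↦ ∑ i ∈ range n, X i ω) B} := by
  set shift : Ω → ℕ → ℝ := fun ω i ↦ X (i + 1) ω
  set V : Set (ℕ → ℝ) := {x | ∀ n, -a ≤ ∑ i ∈ range n, x i}
  have hV : MeasurableSet V := by
    simp only [V, Set.ofPred_forall]
    exact MeasurableSet.iInter fun n ↦ measurableSet_le measurable_const
      (Finset.measurable_sum _ fun i _ ↦ measurable_pi_apply i)
  have hville := measure_exists_sum_lt_le_exp (hX.precomp Nat.succ_injective)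
    (fun i ↦ hXmeas _) (fun i ↦ hint _) (fun i ↦ hone _) (-a)
  have hstay : 1 - ENNReal.ofReal (Real.exp (-a)) ≤ P (shift ⁻¹' V) := by
    have hcompl : (shift ⁻¹' V)ᶜ = {ω | ∃ n, ∑ i ∈ range n, X (i + 1) ω < -a} := by
      ext ω; simp [shift, V]
    rw [← compl_compl (shift ⁻¹' V), prob_compl_eq_one_sub (hV.preimage ?_).compl, hcompl]
    · exact tsub_le_tsub_left hville 1
    · exact measurable_pi_lambda _ fun i ↦ hXmeas _
  have hexit : (X 0 ⁻¹' {a} ∩ shift ⁻¹' V : Set Ω) ≤ᵐ[P]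
      {ω | ExitsAbove (fun n ↦ ∑ i ∈ range n, X i ω) B} := by
    filter_upwards [hreach] with ω hω ⟨hω0, hωV⟩
    refine exitsAbove_of_nonneg (by simpa using hB) (fun n ↦ ?_) hω
    have h0 : X 0 ω = a := hω0
    have hn : -a ≤ ∑ i ∈ range n, X (i + 1) ω := hωV n
    rw [sum_range_succ', h0]
    linarith
  calc P (X 0 ⁻¹' {a}) * (1 - ENNReal.ofReal (Real.exp (-a)))
      ≤ P (X 0 ⁻¹' {a}) * P (shift ⁻¹' V) := by gcongr
    _ = P (X 0 ⁻¹' {a} ∩ shift ⁻¹' V) :=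
      ((hX.indepFun_zero_shift hXmeas).measure_inter_preimage_eq_mul _ _
        (measurableSet_singleton a) hV).symm
    _ ≤ _ := measure_mono_ae hexit

lemma Real.sub_le_mul_log_div {x y : ℝ} (hx : 0 < x) (hy : 0 < y) :
    x - y ≤ x * Real.log (x / y) := by
  have := Real.one_sub_inv_le_log_of_pos (div_pos hx hy)
  rw [inv_div] at this
  calc x - y = x * (1 - y / x) := by field_simp
    _ ≤ x * Real.log (x / y) := by gcongr

lemma Real.mul_log_div_lt_sub {x y : ℝ} (hx : 0 < x) (hy : 0 < y) (hxy : x ≠ y) :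
    y * Real.log (x / y) < x - y := by
  have := Real.log_lt_sub_one_of_pos (div_pos hx hy) (by rwa [ne_eq, div_eq_one_iff_eq hy.ne'])
  calc y * Real.log (x / y) < y * (x / y - 1) := by gcongr
    _ = x - y := by field_simp

theorem le_measure_exitsAbove_of_two_point {Ω : Type*} [MeasurableSpace Ω] {P : Measure Ω}
    [IsProbabilityMeasure P] {X : ℕ → Ω → ℝ} (hX : iIndepFun X P)
    (hXmeas : ∀ i, Measurable (X i)) {a b α β : ℝ} (hab : a ≠ b) (hα : 0 ≤ α) (hβ : 0 ≤ β)
    (hαβ : α + β = 1) (hXa : ∀ i, P (X i ⁻¹' {a}) = ENNReal.ofReal α)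
    (hXb : ∀ i, P (X i ⁻¹' {b}) = ENNReal.ofReal β)
    (hmoment : α * Real.exp (-a) + β * Real.exp (-b) = 1) (hdrift : 0 < α * a + β * b)
    {B : ℝ} (hB : 0 < B) :
    ENNReal.ofReal (α * (1 - Real.exp (-a))) ≤
      P {ω | ExitsAbove (fun n ↦ ∑ i ∈ range n, X i ω) B} := by
  have hlaw (i : ℕ) : P.map (X i) =
      ENNReal.ofReal α • Measure.dirac a + ENNReal.ofReal β • Measure.dirac b := by
    rw [← hXa i, ← hXb i]
    refine map_eq_two_point (hXmeas i) hab ?_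
    rw [hXa, hXb, ← ENNReal.ofReal_add hα hβ, hαβ, ENNReal.ofReal_one]
  have hcomp {g : ℝ → ℝ} (hg : Measurable g) (i : ℕ) : Integrable (fun ω ↦ g (X i ω)) P ∧
      ∫ ω, g (X i ω) ∂P = α * g a + β * g b := by
    simpa [hα, hβ] using integrable_and_integral_comp_of_map_eq_two_point (hXmeas i)
      ENNReal.ofReal_ne_top ENNReal.ofReal_ne_top (hlaw i) hg
  have hreach : ∀ᵐ ω ∂P, ∃ n, B ≤ ∑ i ∈ range n, X i ω := by
    have hident (i : ℕ) : IdentDistrib (X i) (X 0) P P :=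
      ⟨(hXmeas i).aemeasurable, (hXmeas 0).aemeasurable, by rw [hlaw, hlaw]⟩
    have hmean : ∫ ω, X 0 ω ∂P = α * a + β * b := (hcomp measurable_id 0).2
    filter_upwards [ae_tendsto_sum_atTop_of_integral_pos (hcomp measurable_id 0).1
      (fun i j hij ↦ hX.indepFun hij) hident (hmean ▸ hdrift)] with ω hω
    exact (hω.eventually_ge_atTop B).exists
  have hexp : Measurable fun x : ℝ ↦ Real.exp (-x) := by fun_prop
  calc ENNReal.ofReal (α * (1 - Real.exp (-a)))
      = P (X 0 ⁻¹' {a}) * (1 - ENNReal.ofReal (Real.exp (-a))) := by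
        rw [hXa 0, ENNReal.ofReal_mul hα, ENNReal.ofReal_sub _ (Real.exp_pos _).le,
          ENNReal.ofReal_one]
    _ ≤ _ := mul_le_measure_exitsAbove hX hXmeas (fun i ↦ (hcomp hexp i).1)
      (fun i ↦ (hcomp hexp i).2.trans hmoment) hB hreach a

lemma Real.mul_exp_neg_log_div {x y : ℝ} (hx : 0 < x) (hy : 0 < y) :
    x * Real.exp (-Real.log (x / y)) = y := by
  rw [Real.exp_neg, Real.exp_log (div_pos hx hy), inv_div]
  field_simp

section HeavyCoin

variable {ε p q : ℝ}

lemma heavyCoin_drift_pos (hε : 0 < ε) (hp : ε < p) (hq : ε < q) :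
    0 < (p + ε) * Real.log ((p + ε) / (p - ε)) + (q - ε) * -Real.log ((q + ε) / (q - ε)) := by
  have hH := Real.sub_le_mul_log_div (x := p + ε) (y := p - ε) (by linarith) (by linarith)
  have hT := Real.mul_log_div_lt_sub (x := q + ε) (y := q - ε) (by linarith) (by linarith)
    (by linarith)
  linarith

lemma heavyCoin_bound_le (hε : 0 < ε) (hp : ε < p) (hq : ε < q) :
    (Real.log ((p + ε) / (p - ε)) * (p + ε) - Real.log ((q + ε) / (q - ε)) * (q - ε)) /
      (2 * (Real.log ((p + ε) / (p - ε)) + Real.log ((q + ε) / (q - ε)))) ≤ 2 * ε := by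
  set ΔH := Real.log ((p + ε) / (p - ε))
  set ΔT := Real.log ((q + ε) / (q - ε))
  have hΔH : 0 < ΔH := Real.log_pos ((one_lt_div (by linarith)).2 (by linarith))
  have hΔT : 0 < ΔT := Real.log_pos ((one_lt_div (by linarith)).2 (by linarith))
  have hH := Real.mul_log_div_lt_sub (x := p + ε) (y := p - ε) (by linarith) (by linarith)
    (by linarith)
  have hT := Real.sub_le_mul_log_div (x := q + ε) (y := q - ε) (by linarith) (by linarith)
  rw [div_le_iff₀ (by positivity)]
  nlinarith [mul_pos hε hΔH, mul_pos hε hΔT]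

end HeavyCoin

/-- For the heavy-coin log-likelihood random walk (i.i.d. steps `+Δ_H` w.p. `p+ε`,
`−Δ_T` w.p. `q−ε`) with absorbing barriers at `B > 0` above and at every state below `0`,
the probability of absorption at the upper barrier is at least
`(Δ_H(p+ε) − Δ_T(q−ε)) / (2(Δ_H+Δ_T))`. -/
theorem heavy_upper_absorption_prob
    (ε p : ℝ) (hε : ε ∈ Set.Ioo (0:ℝ) (1/2)) (hp : p ∈ Set.Ioo ε (1 - ε))
    (q ΔH ΔT : ℝ) (hq : q = 1 - p)
    (hΔH : ΔH = Real.log ((p + ε) / (p - ε)))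
    (hΔT : ΔT = Real.log ((q + ε) / (q - ε)))
    {Ω : Type*} [MeasurableSpace Ω] (P : Measure Ω) [IsProbabilityMeasure P]
    (X : ℕ → Ω → ℝ) (hXmeas : ∀ i, Measurable (X i))
    (hXindep : iIndepFun X P)
    (hXup : ∀ i, P {ω | X i ω = ΔH} = ENNReal.ofReal (p + ε))
    (hXdown : ∀ i, P {ω | X i ω = -ΔT} = ENNReal.ofReal (q - ε))
    (B : ℝ) (hB : 0 < B)
    (S : ℕ → Ω → ℝ) (hS : ∀ n ω, S n ω = ∑ i ∈ Finset.range n, X i ω)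
    (hit : Ω → Set ℕ)
    (hhit : ∀ ω, hit ω = {n : ℕ | 1 ≤ n ∧ (B ≤ S n ω ∨ S n ω < 0)}) :
    ENNReal.ofReal ((ΔH * (p + ε) - ΔT * (q - ε)) / (2 * (ΔH + ΔT)))
      ≤ P {ω | (hit ω).Nonempty ∧ B ≤ S (sInf (hit ω)) ω} := by
  obtain rfl : S = fun n ω ↦ ∑ i ∈ range n, X i ω := funext₂ hS
  obtain rfl : hit = fun ω ↦ exitTimes (fun n ↦ ∑ i ∈ range n, X i ω) B := funext hhit
  subst hΔH hΔT
  obtain ⟨hε0, -⟩ := hε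
  obtain ⟨hpε, hpε'⟩ := hp
  have hqε : ε < q := by linarith
  have hH : 1 < (p + ε) / (p - ε) := (one_lt_div (by linarith)).2 (by linarith)
  have hT : 1 < (q + ε) / (q - ε) := (one_lt_div (by linarith)).2 (by linarith)
  have hmoment : (p + ε) * Real.exp (-Real.log ((p + ε) / (p - ε))) +
      (q - ε) * Real.exp (-(-Real.log ((q + ε) / (q - ε)))) = 1 := by
    rw [Real.mul_exp_neg_log_div (by linarith) (by linarith), neg_neg,
      Real.exp_log (by linarith), mul_div_cancel₀ _ (sub_pos.2 hqε).ne']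
    linarith
  calc ENNReal.ofReal _ ≤ ENNReal.ofReal (2 * ε) :=
        ENNReal.ofReal_le_ofReal (heavyCoin_bound_le hε0 hpε hqε)
    _ = ENNReal.ofReal ((p + ε) * (1 - Real.exp (-Real.log ((p + ε) / (p - ε))))) := by
        rw [mul_sub, mul_one, Real.mul_exp_neg_log_div (by linarith) (by linarith)]
        ring_nf
    _ ≤ _ := le_measure_exitsAbove_of_two_point hXindep hXmeas
        ((neg_lt_zero.2 (Real.log_pos hT)).trans (Real.log_pos hH)).ne' (by linarith)
        (by linarith) (by rw [hq]; ring) hXup hXdown hmoment (heavyCoin_drift_pos hε0 hpε hqε) hB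
end

section
/- Let (Ω, μ) be a probability space and X : ℕ → Ω → ℝ an i.i.d. sequence with μ(X_i = Δ_H) = p+ε and μ(X_i = −Δ_T) = q−ε. For B > 0 let S_n = Σ_{i<n} X_i, τ_B = inf{n ≥ 1 : S_n ≥ B or S_n < 0}, D(B) = E[τ_B] (the expected number of steps to absorption), and π(B) = μ{ω : τ_B(ω) < ∞ and S_{τ_B(ω)}(ω) ≥ B}. Then there exists B₀ > 0 (depending only on p and ε) such that for all B ≥ B₀: D(B)/π(B) ≤ (8B/(Δ_H·(p+ε) − Δ_T·(q−ε))) · ((Δ_H+Δ_T)/(Δ_H·(p+ε))). -/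
open MeasureTheory ProbabilityTheory Finset Filter
open scoped ENNReal Topology

/-!
Let `τ` be the exit time of the walk `S` from `[0, B)` and `A k = {τ > k}`. The stopped walk
is `S (min τ n) = ∑_{k<n} 1_{A k} X k`, and since `A k` depends only on `X 0, …, X (k-1)`,
each term has mean `m P(A k)`, where `m = Δ_H (p+ε) − Δ_T (q−ε)` is the drift, positive
because `log x < x - 1`. On the other hand `S (min τ n)` is negative after an exit through the
bottom, at most `B + Δ_H` after an exit through the top, and at most `B` before `τ`. Hence
`m ∑_{k<n} P(A k) ≤ (B + Δ_H) π(B) + B P(A n)`; letting `n → ∞` gives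
`m E[τ] ≤ (B + Δ_H) π(B)`, and `B + Δ_H ≤ 2B` once `B ≥ Δ_H`.
-/

lemma sub_lt_mul_log_div {a b : ℝ} (hb : 0 < b) (hba : b < a) : a - b < a * Real.log (a / b) := by
  have ha : 0 < a := hb.trans hba
  have h := Real.log_lt_sub_one_of_pos (div_pos hb ha) ((div_lt_one ha).2 hba).ne
  rw [← inv_div, Real.log_inv]
  calc a - b = a * (1 - b / a) := by field_simp
    _ < a * -Real.log (b / a) := by gcongr; linarith

lemma mul_log_div_lt_sub {a b : ℝ} (hb : 0 < b) (hba : b < a) : b * Real.log (a / b) < a - b := by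
  have h := Real.log_lt_sub_one_of_pos (div_pos (hb.trans hba) hb) ((one_lt_div hb).2 hba).ne'
  calc b * Real.log (a / b) < b * (a / b - 1) := by gcongr
    _ = a - b := by field_simp

lemma log_div_mul_sub_log_div_mul_pos {ε p q : ℝ} (hε : 0 < ε) (hp : ε < p) (hq : ε < q) :
    0 < Real.log ((p + ε) / (p - ε)) * (p + ε) - Real.log ((q + ε) / (q - ε)) * (q - ε) := by
  have hH := sub_lt_mul_log_div (a := p + ε) (sub_pos.2 hp) (by linarith)
  have hT := mul_log_div_lt_sub (a := q + ε) (sub_pos.2 hq) (by linarith)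
  linarith

lemma summable_and_mul_tsum_le_of_mul_sum_range_le {r : ℕ → ℝ} {m C D : ℝ} (hm : 0 < m)
    (hr₀ : ∀ n, 0 ≤ r n) (hr₁ : ∀ n, r n ≤ 1) (hD : 0 ≤ D)
    (h : ∀ n, m * ∑ k ∈ range n, r k ≤ C + D * r n) :
    Summable r ∧ m * ∑' n, r n ≤ C := by
  have hsum : Summable r := summable_of_sum_range_le hr₀ (c := (C + D) / m) fun n => by
    rw [le_div_iff₀ hm, mul_comm]
    linarith [h n, mul_le_of_le_one_right hD (hr₁ n)]
  refine ⟨hsum, le_of_tendsto_of_tendsto' (hsum.hasSum.tendsto_sum_nat.const_mul m) ?_ h⟩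
  simpa using tendsto_const_nhds.add (hsum.tendsto_atTop_zero.const_mul D)

section TwoPoint

variable {Ω : Type*} [MeasurableSpace Ω] {P : Measure Ω} {Y : Ω → ℝ} {a b : ℝ}

lemma ae_eq_or_eq_of_measure_add_eq_one [IsProbabilityMeasure P] (hY : Measurable Y)
    (hab : a ≠ b) (h : P {ω | Y ω = a} + P {ω | Y ω = b} = 1) :
    ∀ᵐ ω ∂P, Y ω = a ∨ Y ω = b := by
  have hdisj : Disjoint {ω | Y ω = a} {ω | Y ω = b} :=
    Set.disjoint_left.2 fun ω h₁ h₂ => hab (h₁.symm.trans h₂)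
  have ha : MeasurableSet {ω | Y ω = a} := hY (measurableSet_singleton a)
  have hb : MeasurableSet {ω | Y ω = b} := hY (measurableSet_singleton b)
  rw [ae_iff_measure_eq (Set.ofPred_or ▸ ha.union hb).nullMeasurableSet, measure_univ,
    Set.ofPred_or, measure_union hdisj hb, h]

lemma ae_eq_indicator_add_indicator (hY : ∀ᵐ ω ∂P, Y ω = a ∨ Y ω = b) (hab : a ≠ b) :
    Y =ᵐ[P] fun ω => {ω | Y ω = a}.indicator (fun _ => a) ω +
      {ω | Y ω = b}.indicator (fun _ => b) ω := by
  filter_upwards [hY] with ω h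
  rcases h with h | h <;> simp [Set.indicator, h, hab, hab.symm]

lemma integrable_of_ae_eq_or_eq [IsFiniteMeasure P] (hY : Measurable Y)
    (hY2 : ∀ᵐ ω ∂P, Y ω = a ∨ Y ω = b) (hab : a ≠ b) : Integrable Y P :=
  (((integrable_const a).indicator (hY (measurableSet_singleton a))).add
    ((integrable_const b).indicator (hY (measurableSet_singleton b)))).congr
    (ae_eq_indicator_add_indicator hY2 hab).symm

lemma integral_eq_of_ae_eq_or_eq [IsFiniteMeasure P] (hY : Measurable Y)
    (hY2 : ∀ᵐ ω ∂P, Y ω = a ∨ Y ω = b) (hab : a ≠ b) :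
    ∫ ω, Y ω ∂P = a * P.real {ω | Y ω = a} + b * P.real {ω | Y ω = b} := by
  have ha : MeasurableSet {ω | Y ω = a} := hY (measurableSet_singleton a)
  have hb : MeasurableSet {ω | Y ω = b} := hY (measurableSet_singleton b)
  rw [integral_congr_ae (ae_eq_indicator_add_indicator hY2 hab),
    integral_add ((integrable_const a).indicator ha) ((integrable_const b).indicator hb),
    integral_indicator_const _ ha, integral_indicator_const _ hb, smul_eq_mul, smul_eq_mul,
    mul_comm, mul_comm (P.real _)]

end TwoPoint

lemma ProbabilityTheory.iIndepFun.integral_indicator_eq_measureReal_mul {Ω : Type*}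
    [MeasurableSpace Ω] {P : Measure Ω} {X : ℕ → Ω → ℝ}
    (hX : ∀ i, Measurable (X i)) (hind : iIndepFun X P) {k : ℕ} {A : Set Ω}
    (hA : MeasurableSet[⨆ i ∈ {i | i < k}, MeasurableSpace.comap (X i) inferInstance] A) :
    ∫ ω, A.indicator (X k) ω ∂P = P.real A * ∫ ω, X k ω ∂P := by
  have hle : ∀ i, MeasurableSpace.comap (X i) inferInstance ≤ ‹MeasurableSpace Ω› :=
    fun i => (hX i).comap_le
  have hA' : MeasurableSet A := iSup₂_le (fun i _ => hle i) A hA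
  have hindep : IndepFun (A.indicator (1 : Ω → ℝ)) (X k) P := by
    rw [IndepFun_iff_Indep]
    refine indep_of_indep_of_le_right
      (indep_of_indep_of_le_left (indep_biSup_compl hle hind.iIndep {i | i < k}) ?_) ?_
    · exact measurable_iff_comap_le.1 (measurable_const.indicator hA)
    · exact le_biSup (fun i => MeasurableSpace.comap (X i) inferInstance)
        (show k ∈ {i | i < k}ᶜ from lt_irrefl k)
  calc ∫ ω, A.indicator (X k) ω ∂P
      = ∫ ω, (A.indicator (1 : Ω → ℝ) * X k) ω ∂P := by
        congr 1; ext ω; by_cases h : ω ∈ A <;> simp [h]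
    _ = P.real A * ∫ ω, X k ω ∂P := by
      rw [hindep.integral_mul_eq_mul_integral
        ((measurable_one.indicator hA').aestronglyMeasurable) (hX k).aestronglyMeasurable,
        integral_indicator_one hA']

namespace BarrierWalk

variable {Ω : Type*}

section Deterministic

variable (X : ℕ → Ω → ℝ) (B : ℝ)

def walk (n : ℕ) (ω : Ω) : ℝ := ∑ i ∈ range n, X i ω

def exitSet (ω : Ω) : Set ℕ := {n | 1 ≤ n ∧ (B ≤ walk X n ω ∨ walk X n ω < 0)}

def survivesUntil (n : ℕ) : Set Ω := {ω | ∀ j ≤ n, j ∉ exitSet X B ω}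

def upperExit : Set Ω :=
  {ω | (exitSet X B ω).Nonempty ∧ B ≤ walk X (sInf (exitSet X B ω)) ω}

open Classical in
noncomputable def exitTime (ω : Ω) : ℝ≥0∞ :=
  if (exitSet X B ω).Nonempty then ((sInf (exitSet X B ω) : ℕ) : ℝ≥0∞) else ⊤

variable {X B} {ω : Ω} {n : ℕ}

lemma walk_zero : walk X 0 ω = 0 := sum_range_zero _

lemma walk_succ : walk X (n + 1) ω = walk X n ω + X n ω := sum_range_succ _ _

lemma survivesUntil_zero : survivesUntil X B 0 = Set.univ :=
  Set.eq_univ_of_forall fun _ j hj hexit => by have := hexit.1; omega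

lemma survivesUntil_antitone : Antitone (survivesUntil X B) :=
  fun _ _ hkn _ hω j hj => hω j (hj.trans hkn)

lemma mem_survivesUntil_iff_lt_sInf (h : (exitSet X B ω).Nonempty) :
    ω ∈ survivesUntil X B n ↔ n < sInf (exitSet X B ω) :=
  ⟨fun hω => not_le.1 fun hle => hω _ hle (Nat.sInf_mem h),
    fun hlt _ hj => Nat.notMem_of_lt_sInf (hj.trans_lt hlt)⟩

lemma mem_survivesUntil_of_not_nonempty (h : ¬(exitSet X B ω).Nonempty) :
    ω ∈ survivesUntil X B n :=
  fun j _ hj => h ⟨j, hj⟩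

lemma nonempty_and_sInf_le_of_notMem (h : ω ∉ survivesUntil X B n) :
    (exitSet X B ω).Nonempty ∧ sInf (exitSet X B ω) ≤ n := by
  by_cases hne : (exitSet X B ω).Nonempty
  · exact ⟨hne, not_lt.1 fun hlt => h ((mem_survivesUntil_iff_lt_sInf hne).2 hlt)⟩
  · exact absurd (mem_survivesUntil_of_not_nonempty hne) h

lemma walk_le_of_mem_survivesUntil (hB : 0 ≤ B) (h : ω ∈ survivesUntil X B n) :
    walk X n ω ≤ B := by
  rcases Nat.eq_zero_or_pos n with rfl | hn
  · rw [walk_zero]; exact hB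
  · by_contra hlt
    exact h n le_rfl ⟨hn, .inl (not_le.1 hlt).le⟩

lemma walk_sInf_exitSet_le {a : ℝ} (hB : 0 ≤ B) (hXa : ∀ k, X k ω ≤ a)
    (h : (exitSet X B ω).Nonempty) : walk X (sInf (exitSet X B ω)) ω ≤ B + a := by
  obtain ⟨k, hk⟩ : ∃ k, sInf (exitSet X B ω) = k + 1 :=
    Nat.exists_eq_add_one.2 (Nat.sInf_mem h).1
  have hkB := walk_le_of_mem_survivesUntil (n := k) hB
    ((mem_survivesUntil_iff_lt_sInf h).2 (by omega))
  rw [hk, walk_succ]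
  linarith [hXa k]

lemma sum_indicator_survivesUntil_of_mem (h : ω ∈ survivesUntil X B n) :
    ∑ k ∈ range n, (survivesUntil X B k).indicator (X k) ω = walk X n ω :=
  sum_congr rfl fun _ hk =>
    Set.indicator_of_mem (survivesUntil_antitone (mem_range.1 hk).le h) _

lemma sum_indicator_survivesUntil_of_notMem (h : ω ∉ survivesUntil X B n) :
    ∑ k ∈ range n, (survivesUntil X B k).indicator (X k) ω =
      walk X (sInf (exitSet X B ω)) ω := by
  obtain ⟨hne, hle⟩ := nonempty_and_sInf_le_of_notMem h
  rw [← sum_range_add_sum_Ico (fun k => (survivesUntil X B k).indicator (X k) ω) hle,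
    sum_eq_zero (s := Ico _ n) fun k hk => Set.indicator_of_notMem ?_ _, add_zero]
  · exact sum_congr rfl fun k hk =>
      Set.indicator_of_mem ((mem_survivesUntil_iff_lt_sInf hne).2 (mem_range.1 hk)) _
  · exact fun hk' => (mem_Ico.1 hk).1.not_gt ((mem_survivesUntil_iff_lt_sInf hne).1 hk')

lemma sum_indicator_survivesUntil_le {a : ℝ} (hB : 0 ≤ B) (ha : 0 ≤ a)
    (hXa : ∀ k, X k ω ≤ a) (n : ℕ) :
    ∑ k ∈ range n, (survivesUntil X B k).indicator (X k) ω ≤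
      (upperExit X B).indicator (fun _ => B + a) ω +
        (survivesUntil X B n).indicator (fun _ => B) ω := by
  by_cases h : ω ∈ survivesUntil X B n
  · have hE : 0 ≤ (upperExit X B).indicator (fun _ => B + a) ω :=
      Set.indicator_nonneg (fun _ _ => by linarith) _
    rw [sum_indicator_survivesUntil_of_mem h, Set.indicator_of_mem h]
    linarith [walk_le_of_mem_survivesUntil hB h]
  · obtain ⟨hne, -⟩ := nonempty_and_sInf_le_of_notMem h
    rw [sum_indicator_survivesUntil_of_notMem h, Set.indicator_of_notMem h, add_zero]
    by_cases htop : B ≤ walk X (sInf (exitSet X B ω)) ω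
    · rw [Set.indicator_of_mem (show ω ∈ upperExit X B from ⟨hne, htop⟩)]
      exact walk_sInf_exitSet_le hB hXa hne
    · rw [Set.indicator_of_notMem fun hE => htop hE.2]
      exact ((Nat.sInf_mem hne).2.resolve_left htop).le

lemma mem_upperExit_iff :
    ω ∈ upperExit X B ↔ ∃ n, ω ∈ survivesUntil X B n ∧ B ≤ walk X (n + 1) ω := by
  constructor
  · rintro ⟨hne, htop⟩
    obtain ⟨k, hk⟩ : ∃ k, sInf (exitSet X B ω) = k + 1 :=
      Nat.exists_eq_add_one.2 (Nat.sInf_mem hne).1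
    exact ⟨k, (mem_survivesUntil_iff_lt_sInf hne).2 (by omega), hk ▸ htop⟩
  · rintro ⟨n, hn, htop⟩
    have hmem : n + 1 ∈ exitSet X B ω := ⟨by omega, .inl htop⟩
    have hne : (exitSet X B ω).Nonempty := ⟨_, hmem⟩
    have hinf : sInf (exitSet X B ω) = n + 1 :=
      (Nat.sInf_le hmem).antisymm ((mem_survivesUntil_iff_lt_sInf hne).1 hn)
    exact ⟨hne, hinf ▸ htop⟩

lemma exitTime_eq_tsum_indicator (ω : Ω) :
    exitTime X B ω = ∑' n, (survivesUntil X B n).indicator 1 ω := by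
  by_cases hne : (exitSet X B ω).Nonempty
  · have hind : ∀ n, (survivesUntil X B n).indicator (1 : Ω → ℝ≥0∞) ω =
        ((range (sInf (exitSet X B ω)) : Set ℕ)).indicator 1 n := fun n => by
      simp [Set.indicator, mem_survivesUntil_iff_lt_sInf hne]
    rw [tsum_congr hind, tsum_eq_sum fun n hn => Set.indicator_of_notMem hn _,
      sum_congr rfl fun n hn => Set.indicator_of_mem (mem_coe.2 hn) _]
    simp [exitTime, hne]
  · simp [exitTime, hne, mem_survivesUntil_of_not_nonempty hne]

end Deterministic

section Probabilistic

variable {X : ℕ → Ω → ℝ} {B : ℝ}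

lemma measurable_walk {m : MeasurableSpace Ω} {n : ℕ} (hX : ∀ i < n, Measurable[m] (X i)) :
    Measurable[m] (walk X n) :=
  Finset.measurable_sum _ fun i hi => hX i (mem_range.1 hi)

lemma measurableSet_survivesUntil {m : MeasurableSpace Ω} {n : ℕ}
    (hX : ∀ i < n, Measurable[m] (X i)) : MeasurableSet[m] (survivesUntil X B n) := by
  have hS : ∀ j ≤ n, Measurable[m] (walk X j) := fun j hj =>
    measurable_walk fun i hi => hX i (hi.trans_le hj)
  simp only [survivesUntil, Set.ofPred_forall]
  refine MeasurableSet.iInter fun j => MeasurableSet.iInter fun hj => ?_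
  have hexit : MeasurableSet[m] {ω | B ≤ walk X j ω ∨ walk X j ω < 0} :=
    (measurableSet_le measurable_const (hS j hj)).union
      (measurableSet_lt (hS j hj) measurable_const)
  exact ((MeasurableSet.const (1 ≤ j)).inter hexit).compl

variable [MeasurableSpace Ω] {P : Measure Ω} {a m : ℝ}

lemma measurableSet_upperExit (hX : ∀ i, Measurable (X i)) : MeasurableSet (upperExit X B) := by
  have h : upperExit X B = ⋃ n, survivesUntil X B n ∩ {ω | B ≤ walk X (n + 1) ω} :=
    Set.ext fun ω => by simp only [mem_upperExit_iff, Set.mem_iUnion, Set.mem_inter_iff,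
      Set.mem_ofPred_eq]
  rw [h]
  exact .iUnion fun n => (measurableSet_survivesUntil fun i _ => hX i).inter
    (measurableSet_le measurable_const (measurable_walk fun i _ => hX i))

lemma integral_indicator_survivesUntil (hX : ∀ i, Measurable (X i))
    (hind : iIndepFun X P) (k : ℕ) :
    ∫ ω, (survivesUntil X B k).indicator (X k) ω ∂P =
      P.real (survivesUntil X B k) * ∫ ω, X k ω ∂P :=
  hind.integral_indicator_eq_measureReal_mul hX <| measurableSet_survivesUntil fun i hi =>
    measurable_iff_comap_le.2 <|
      le_biSup (fun i => MeasurableSpace.comap (X i) inferInstance) (show i ∈ {i | i < k} from hi)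

lemma mul_sum_measureReal_survivesUntil_le [IsFiniteMeasure P] (hX : ∀ i, Measurable (X i))
    (hind : iIndepFun X P) (hint : ∀ i, Integrable (X i) P)
    (hmean : ∀ i, ∫ ω, X i ω ∂P = m) (hB : 0 ≤ B) (ha : 0 ≤ a)
    (hXa : ∀ᵐ ω ∂P, ∀ i, X i ω ≤ a) (n : ℕ) :
    m * ∑ k ∈ range n, P.real (survivesUntil X B k) ≤
      (B + a) * P.real (upperExit X B) + B * P.real (survivesUntil X B n) := by
  have hA : ∀ k, MeasurableSet (survivesUntil X B k) := fun k =>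
    measurableSet_survivesUntil fun i _ => hX i
  have hE := measurableSet_upperExit (B := B) hX
  calc m * ∑ k ∈ range n, P.real (survivesUntil X B k)
      = ∑ k ∈ range n, ∫ ω, (survivesUntil X B k).indicator (X k) ω ∂P := by
        rw [mul_sum]
        exact sum_congr rfl fun k _ => by
          rw [integral_indicator_survivesUntil hX hind, hmean, mul_comm]
    _ = ∫ ω, ∑ k ∈ range n, (survivesUntil X B k).indicator (X k) ω ∂P :=
        (integral_finsetSum _ fun k _ => (hint k).indicator (hA k)).symm
    _ ≤ ∫ ω, ((upperExit X B).indicator (fun _ => B + a) ω +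
          (survivesUntil X B n).indicator (fun _ => B) ω) ∂P :=
        integral_mono_ae (integrable_finsetSum _ fun k _ => (hint k).indicator (hA k))
          (((integrable_const _).indicator hE).add ((integrable_const _).indicator (hA n)))
          (hXa.mono fun ω hω => sum_indicator_survivesUntil_le hB ha hω n)
    _ = (B + a) * P.real (upperExit X B) + B * P.real (survivesUntil X B n) := by
        rw [integral_add ((integrable_const _).indicator hE)
            ((integrable_const _).indicator (hA n)),
          integral_indicator_const _ hE, integral_indicator_const _ (hA n), smul_eq_mul,
          smul_eq_mul, mul_comm, mul_comm (P.real _)]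

lemma lintegral_exitTime_eq_tsum (hX : ∀ i, Measurable (X i)) :
    ∫⁻ ω, exitTime X B ω ∂P = ∑' n, P (survivesUntil X B n) := by
  have hA : ∀ n, MeasurableSet (survivesUntil X B n) := fun n =>
    measurableSet_survivesUntil fun i _ => hX i
  simp_rw [exitTime_eq_tsum_indicator]
  rw [lintegral_tsum fun n => (measurable_one.indicator (hA n)).aemeasurable]
  exact tsum_congr fun n => lintegral_indicator_one (hA n)

theorem lintegral_exitTime_div_measure_upperExit_le [IsProbabilityMeasure P]
    (hX : ∀ i, Measurable (X i)) (hind : iIndepFun X P) (hint : ∀ i, Integrable (X i) P)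
    (hmean : ∀ i, ∫ ω, X i ω ∂P = m) (hm : 0 < m) (hB : 0 ≤ B) (ha : 0 ≤ a)
    (hXa : ∀ᵐ ω ∂P, ∀ i, X i ω ≤ a) :
    (∫⁻ ω, exitTime X B ω ∂P) / P (upperExit X B) ≤ ENNReal.ofReal ((B + a) / m) := by
  obtain ⟨hsum, hle⟩ := summable_and_mul_tsum_le_of_mul_sum_range_le hm
    (fun _ => measureReal_nonneg) (fun _ => measureReal_le_one) hB
    (mul_sum_measureReal_survivesUntil_le hX hind hint hmean hB ha hXa)
  have hT : 1 ≤ ∑' n, P.real (survivesUntil X B n) := by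
    simpa [survivesUntil_zero] using hsum.le_tsum 0 fun j _ => measureReal_nonneg
  have hπ : 0 < P.real (upperExit X B) := by
    by_contra! h
    nlinarith [mul_nonpos_of_nonneg_of_nonpos (add_nonneg hB ha) h]
  rw [lintegral_exitTime_eq_tsum hX, ← ofReal_measureReal (s := upperExit X B),
    ← tsum_congr fun n => ofReal_measureReal (s := survivesUntil X B n),
    ← ENNReal.ofReal_tsum_of_nonneg (fun _ => measureReal_nonneg) hsum,
    ← ENNReal.ofReal_div_of_pos hπ]
  refine ENNReal.ofReal_le_ofReal ?_
  rw [div_le_div_iff₀ hπ hm]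
  linarith

end Probabilistic

end BarrierWalk

open BarrierWalk

open Classical in
/-- For the heavy-coin log-likelihood random walk with upper barrier `B` and lower barriers
below `0`, writing `D(B)` for the expected absorption time and `π(B)` for the probability of
absorption at `B`, there is a threshold `B₀ > 0` depending only on `p` and `ε` such that for
all `B ≥ B₀`, `D(B)/π(B) ≤ (8B/(Δ_H(p+ε) − Δ_T(q−ε)))·((Δ_H+Δ_T)/(Δ_H(p+ε)))`. -/
theorem heavy_expected_time_over_absorption_prob
    (ε p : ℝ) (hε : ε ∈ Set.Ioo (0:ℝ) (1/2)) (hp : p ∈ Set.Ioo ε (1 - ε))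
    (q ΔH ΔT : ℝ) (hq : q = 1 - p)
    (hΔH : ΔH = Real.log ((p + ε) / (p - ε)))
    (hΔT : ΔT = Real.log ((q + ε) / (q - ε))) :
    ∃ B₀ : ℝ, 0 < B₀ ∧
      ∀ (Ω : Type) [MeasurableSpace Ω] (P : Measure Ω) [IsProbabilityMeasure P]
        (X : ℕ → Ω → ℝ), (∀ i, Measurable (X i)) →
        iIndepFun X P →
        (∀ i, P {ω | X i ω = ΔH} = ENNReal.ofReal (p + ε)) →
        (∀ i, P {ω | X i ω = -ΔT} = ENNReal.ofReal (q - ε)) →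
        ∀ (B : ℝ), B₀ ≤ B →
        ∀ (S : ℕ → Ω → ℝ), (∀ n ω, S n ω = ∑ i ∈ Finset.range n, X i ω) →
        ∀ (hit : Ω → Set ℕ),
          (∀ ω, hit ω = {n : ℕ | 1 ≤ n ∧ (B ≤ S n ω ∨ S n ω < 0)}) →
          (∫⁻ ω, (if (hit ω).Nonempty then ((sInf (hit ω) : ℕ) : ENNReal) else ⊤) ∂P) /
              P {ω | (hit ω).Nonempty ∧ B ≤ S (sInf (hit ω)) ω}
            ≤ ENNReal.ofReal
                ((8 * B / (ΔH * (p + ε) - ΔT * (q - ε))) * ((ΔH + ΔT) / (ΔH * (p + ε)))) := by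
  obtain ⟨hε, -⟩ := hε
  obtain ⟨hεp, hpε⟩ := hp
  have hΔH_pos : 0 < ΔH := hΔH ▸ Real.log_pos ((one_lt_div (by linarith)).2 (by linarith))
  have hΔT_pos : 0 < ΔT := hΔT ▸ Real.log_pos ((one_lt_div (by linarith)).2 (by linarith))
  have hm : 0 < ΔH * (p + ε) - ΔT * (q - ε) := by
    rw [hΔH, hΔT]; exact log_div_mul_sub_log_div_mul_pos hε hεp (by linarith)
  refine ⟨ΔH, hΔH_pos, fun Ω _ P _ X hX hind hH hT B hB S hS hit hhit => ?_⟩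
  obtain rfl : S = walk X := funext fun n => funext (hS n)
  obtain rfl : hit = exitSet X B := funext hhit
  have hne : ΔH ≠ -ΔT := by linarith
  have htwo : ∀ i, ∀ᵐ ω ∂P, X i ω = ΔH ∨ X i ω = -ΔT := fun i =>
    ae_eq_or_eq_of_measure_add_eq_one (hX i) hne <| by
      rw [hH, hT, ← ENNReal.ofReal_add (by linarith) (by linarith)]
      simp [hq]
  have hmean : ∀ i, ∫ ω, X i ω ∂P = ΔH * (p + ε) - ΔT * (q - ε) := fun i => by
    rw [integral_eq_of_ae_eq_or_eq (hX i) (htwo i) hne, measureReal_def, measureReal_def, hH, hT,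
      ENNReal.toReal_ofReal (by linarith), ENNReal.toReal_ofReal (by linarith)]
    ring
  have hXa : ∀ᵐ ω ∂P, ∀ i, X i ω ≤ ΔH := ae_all_iff.2 fun i =>
    (htwo i).mono fun ω h => by rcases h with h | h <;> linarith
  have hc : 1 ≤ (ΔH + ΔT) / (ΔH * (p + ε)) := by
    rw [one_le_div (mul_pos hΔH_pos (by linarith))]
    nlinarith
  calc _ ≤ ENNReal.ofReal ((B + ΔH) / (ΔH * (p + ε) - ΔT * (q - ε))) :=
        lintegral_exitTime_div_measure_upperExit_le hX hind
          (fun i => integrable_of_ae_eq_or_eq (hX i) (htwo i) hne) hmean hm (by linarith)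
          hΔH_pos.le hXa
    _ ≤ ENNReal.ofReal (8 * B / (ΔH * (p + ε) - ΔT * (q - ε))) := by gcongr; linarith
    _ ≤ _ := ENNReal.ofReal_le_ofReal <|
        le_mul_of_one_le_right (div_nonneg (by linarith) hm.le) hc
end
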